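/- For every Li-Chao tree t, every line f, and every pair of integer bounds l ≤ r: size (insert t f l r) ≤ size t + 1, where size counts the number of node constructors in the tree. -/

import Mathlib

/-- A line `y = k*x + b`, represented as the pair `(k, b)` of integers. -/
abbrev Line : Type := ℤ × ℤ

/-- Evaluation of a line at an integer point. -/
def Line.eval (f : Line) (x : ℤ) : ℤ := f.1 * x + f.2

/-- A Li-Chao tree: either empty, or a node storing a line with two subtrees. -/
inductive LiChao : Type where
  | nil : LiChao
  | node : Line → LiChao → LiChao → LiChao

/-- Insert a line `f` into the tree over integer bounds `[l, r]`. -/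
def LiChao.insert : LiChao → Line → ℤ → ℤ → LiChao
  | .nil, f, _, _ => .node f .nil .nil
  | .node s a b, f, l, r =>
    let m := (l + r) / 2
    let win : Line := if f.eval m < s.eval m then f else s
    let lose : Line := if f.eval m < s.eval m then s else f
    if l = r then .node win a b
    else if lose.eval l < win.eval l then
      .node win (LiChao.insert a lose l m) b
    else
      .node win a (LiChao.insert b lose (m + 1) r)

/-- Query the minimum value at `x` over bounds `[l, r]`; `⊤` for the empty tree. -/
def LiChao.query : LiChao → ℤ → ℤ → ℤ → WithTop ℤ
  | .nil, _, _, _ => ⊤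
  | .node s a b, x, l, r =>
    let m := (l + r) / 2
    if x ≤ m then min (s.eval x : WithTop ℤ) (LiChao.query a x l m)
    else min (s.eval x : WithTop ℤ) (LiChao.query b x (m + 1) r)

/-- Fold insertion over a list of lines, starting from the empty tree. -/
def LiChao.insertAll (L : List Line) (l r : ℤ) : LiChao :=
  L.foldl (fun t f => t.insert f l r) .nil

/-- Number of `node` constructors in the tree. -/
def LiChao.size : LiChao → ℕ
  | .nil => 0
  | .node _ a b => 1 + a.size + b.size

/-- Height of the tree. -/
def LiChao.height : LiChao → ℕ
  | .nil => 0
  | .node _ a b => 1 + max a.height b.height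

/-! Insertion into a node keeps the winning line at the node and passes the losing line down into
at most one subtree, so an insertion follows a single root-to-leaf path and only the `nil` it
may reach at the end is replaced by a new node. -/

namespace LiChao

theorem exists_insert_node_eq (s : Line) (a b : LiChao) (f : Line) (l r : ℤ) :
    ∃ w g : Line, (node s a b).insert f l r = node w a b ∨
      (node s a b).insert f l r = node w (a.insert g l ((l + r) / 2)) b ∨
      (node s a b).insert f l r = node w a (b.insert g ((l + r) / 2 + 1) r) := by
  simp only [insert]
  split_ifs
  all_goals first
    | exact ⟨_, f, Or.inl rfl⟩
    | exact ⟨_, _, Or.inr (Or.inl rfl)⟩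
    | exact ⟨_, _, Or.inr (Or.inr rfl)⟩

end LiChao

theorem lichao_insert_size_general (t : LiChao) (f : Line) (l r : ℤ) :
    (t.insert f l r).size ≤ t.size + 1 := by
  induction t generalizing f l r with
  | nil => simp [LiChao.insert, LiChao.size]
  | node s a b iha ihb =>
    obtain ⟨w, g, h | h | h⟩ := LiChao.exists_insert_node_eq s a b f l r <;>
      rw [h] <;> simp only [LiChao.size]
    · omega
    · have := iha g l ((l + r) / 2)
      omega
    · have := ihb g ((l + r) / 2 + 1) r
      omega

/-- Each insertion creates at most one new node. -/
theorem lichao_insert_size (t : LiChao) (f : Line) (l r : ℤ) (hlr : l ≤ r) :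
    (t.insert f l r).size ≤ t.size + 1 :=
  lichao_insert_size_general t f l r
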